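/- For n ≥ 1 set m_n = c^n_{x_{2^{n−1}−1}, x_{2^{n−1}}} (conductance between the middle bottom-row point of V_n and its left neighbor, for the set E_n⁺ computed at level n) and l_n = c^n_{x₀,x₁}. Then m_n = c^n_{x_{2^{n−1}}, x_{2^{n−1}+1}}, m_1 = 20/9, and for every n ≥ 1: m_{n+1} = (5/3)·l_n + 294·25^{n+1} / ((3^{n+1} + 6·10^{n+1})·(5·3^{n+1} + 9·10^{n+1})). -/

import Mathlib

open scoped BigOperators

noncomputable section

namespace SGPaper

/-- The three corners of the Sierpinski gasket:
`q₀ = (1/2, √3/2)`, `q₁ = (0,0)`, `q₂ = (1,0)`. -/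
def q : Fin 3 → ℝ × ℝ
  | 0 => (1 / 2, Real.sqrt 3 / 2)
  | 1 => (0, 0)
  | 2 => (1, 0)

/-- The contraction map towards corner `i`: `F_i(x) = (x + q_i)/2`. -/
def Fmap (i : Fin 3) (x : ℝ × ℝ) : ℝ × ℝ := (2⁻¹ : ℝ) • (x + q i)

/-- `Fword w = F_{w₁} ∘ ⋯ ∘ F_{w_m}` for the word `w = w₁⋯w_m`. -/
def Fword (w : List (Fin 3)) : ℝ × ℝ → ℝ × ℝ :=
  w.foldr (fun i f => Fmap i ∘ f) id

/-- The level-`m` vertex set of the Sierpinski gasket: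
`V_m = ⋃_{|w| = m} F_w({q₀, q₁, q₂})`. -/
def V (m : ℕ) : Set (ℝ × ℝ) :=
  {x | ∃ w : List (Fin 3), w.length = m ∧ ∃ i : Fin 3, x = Fword w (q i)}

/-- `x` and `y` are `m`-neighbors: they are distinct and belong to a common
level-`m` cell `F_w({q₀, q₁, q₂})`. -/
def Nbr (m : ℕ) (x y : ℝ × ℝ) : Prop :=
  x ≠ y ∧ ∃ w : List (Fin 3), w.length = m ∧
    (∃ i : Fin 3, x = Fword w (q i)) ∧ (∃ j : Fin 3, y = Fword w (q j))

/-- The value `(u x - u y)²` on the unordered pair `{x, y}`. -/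
def edgeVal (u : ℝ × ℝ → ℝ) : Sym2 (ℝ × ℝ) → ℝ :=
  Sym2.lift ⟨fun x y => (u x - u y) ^ 2, fun _ _ => by ring⟩

/-- The unordered pair `e` is an edge of the level-`m` graph `Γ_m`. -/
def IsEdge (m : ℕ) (e : Sym2 (ℝ × ℝ)) : Prop :=
  ∃ x y : ℝ × ℝ, Nbr m x y ∧ e = s(x, y)

/-- The level-`m` graph energy: `E_m(u) = (5/3)^m Σ (u x − u y)²`, the sum being over
unordered `m`-neighbor pairs `{x, y}` (a finite set, so `tsum` is the honest sum). -/
def Energy (m : ℕ) (u : ℝ × ℝ → ℝ) : ℝ :=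
  (5 / 3 : ℝ) ^ m * ∑' e : {e : Sym2 (ℝ × ℝ) // IsEdge m e}, edgeVal u e

/-- `Q_E(v)`: minimal level-`m` energy among functions `u : V_m → ℝ` agreeing
with `v` on `E` (the minimum is attained, so it equals this infimum). -/
def Q (m : ℕ) (E : Set (ℝ × ℝ)) (v : ℝ × ℝ → ℝ) : ℝ :=
  sInf {r | ∃ u : ℝ × ℝ → ℝ, (∀ x ∈ E, u x = v x) ∧ r = Energy m u}

/-- Indicator function of the point `z`. -/
def ind (z : ℝ × ℝ) : ℝ × ℝ → ℝ := fun t => if t = z then 1 else 0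

/-- The conductance `c^E_{x,y} = (Q_E(𝟙_x) + Q_E(𝟙_y) − Q_E(𝟙_x + 𝟙_y))/2`
between `x, y ∈ E`, computed at level `m`. -/
def cond (m : ℕ) (E : Set (ℝ × ℝ)) (x y : ℝ × ℝ) : ℝ :=
  (Q m E (ind x) + Q m E (ind y) - Q m E (ind x + ind y)) / 2

/-- The `j`-th bottom-row point of `V_n`: `x_j = q₁ + (j/2ⁿ)(q₂ − q₁)`. -/
def xb (n j : ℕ) : ℝ × ℝ := q 1 + ((j : ℝ) / 2 ^ n) • (q 2 - q 1)

/-- The bottom row `Ẽ_n = {x₀, …, x_{2ⁿ}}` of `V_n`. -/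
def Ebot (n : ℕ) : Set (ℝ × ℝ) := {p | ∃ j ≤ 2 ^ n, p = xb n j}

/-- The bottom row together with the top point: `E_n⁺ = {q₀, x₀, …, x_{2ⁿ}}`. -/
def Eplus (n : ℕ) : Set (ℝ × ℝ) := insert (q 0) (Ebot n)

/-!
Fix values `b` on the bottom row and `s` at the top vertex `q 0`. The least level-`n` energy is
then a quadratic `α - 2 β s + S s²` in `s` (`HasTrace`). Cutting `V (n + 1)` into three level-`n`
cells, the top cell costs only the energy of its corner values (the harmonic extension
renormalises energy by `5 / 3`), so minimising over the values at the midpoints of the two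
slanted sides gives `α, β, S` at level `n + 1` from those of the two bottom cells. This yields
`S_n = 14·10ⁿ / (6·10ⁿ + 3ⁿ)` and explicit `β`'s for the indicators of `q 1`, of `q 2` and of
its neighbour `x_{2ⁿ-1}`. A conductance is `(α_x + α_y - α_{x+y}) / 2`; for the two middle
points at level `n + 1` the unknown level-`n` constants `α` enter only through the level-`n`
conductance between `x_{2ⁿ-1}` and `x_{2ⁿ}`, which gives the recursion. The reflection
`(x, y) ↦ (1 - x, y)` preserves the energy: it identifies that conductance with `l_n` and gives
`m_n = c_{x_{2^{n-1}}, x_{2^{n-1}+1}}`.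
-/

lemma sqrt_three_pos : 0 < √3 := by positivity

def qt : Fin 3 → ℝ := ![1 / 2, 0, 0]

lemma q_eq (i : Fin 3) : q i = ((q i).1, √3 * qt i) := by
  fin_cases i <;> simp [q, qt, div_eq_mul_inv]

lemma mk_eq_q_iff {x t : ℝ} {i : Fin 3} : (x, √3 * t) = q i ↔ x = (q i).1 ∧ t = qt i := by
  rw [q_eq i, Prod.mk.injEq, mul_right_inj' sqrt_three_pos.ne']

lemma q_injective : Function.Injective q := by
  intro i j h
  have := sqrt_three_pos
  fin_cases i <;> fin_cases j <;> simp_all [q, Prod.ext_iff]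

lemma Fmap_apply (i : Fin 3) (z : ℝ × ℝ) :
    Fmap i z = ((z.1 + (q i).1) / 2, (z.2 + (q i).2) / 2) := by
  ext <;> simp [Fmap, div_eq_inv_mul, mul_add]

lemma Fmap_injective (i : Fin 3) : Function.Injective (Fmap i) := by
  intro a b h
  simp only [Fmap_apply, Prod.mk.injEq] at h
  exact Prod.ext (by linarith) (by linarith)

lemma Fmap_q_self (i : Fin 3) : Fmap i (q i) = q i := by
  rw [Fmap_apply]; ext <;> ring

lemma Fmap_q_comm (i j : Fin 3) : Fmap i (q j) = Fmap j (q i) := by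
  simp only [Fmap_apply]; ext <;> ring

-- Heights are written as `√3 * t`, so that all constraints are linear in `t`.
def triangle : Set (ℝ × ℝ) := {z | ∃ t, 0 ≤ t ∧ t ≤ z.1 ∧ t ≤ 1 - z.1 ∧ z.2 = √3 * t}

lemma q_mem_triangle (i : Fin 3) : q i ∈ triangle := by
  refine ⟨qt i, ?_, ?_, ?_, congrArg Prod.snd (q_eq i)⟩ <;> fin_cases i <;> norm_num [q, qt]

lemma Fmap_mem_triangle (i : Fin 3) {z : ℝ × ℝ} (hz : z ∈ triangle) : Fmap i z ∈ triangle := by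
  obtain ⟨t, h0, h1, h2, hz⟩ := hz
  refine ⟨(t + qt i) / 2, ?_⟩
  rw [Fmap_apply, hz, q_eq i]
  fin_cases i <;> norm_num [q, qt] <;> refine ⟨?_, ?_, ?_, ?_⟩ <;> linarith

lemma Fmap_eq_Fmap_of_ne {i j : Fin 3} (hij : i ≠ j) {a b : ℝ × ℝ} (ha : a ∈ triangle)
    (hb : b ∈ triangle) (h : Fmap i a = Fmap j b) : a = q j ∧ b = q i := by
  obtain ⟨ta, ha0, ha1, ha2, ha⟩ := ha
  obtain ⟨tb, hb0, hb1, hb2, hb⟩ := hb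
  obtain ⟨a1, a2⟩ := a
  obtain ⟨b1, b2⟩ := b
  simp only at ha hb ha1 ha2 hb1 hb2
  subst ha hb
  rw [mk_eq_q_iff, mk_eq_q_iff]
  rw [Fmap_apply, Fmap_apply, q_eq i, q_eq j, Prod.mk.injEq] at h
  obtain ⟨hx, hy⟩ := h
  have ht : ta + qt i = tb + qt j := by
    apply mul_left_cancel₀ sqrt_three_pos.ne'
    linarith
  fin_cases i <;> fin_cases j <;> simp [q, qt] at hij hx ht ⊢ <;>
    refine ⟨⟨?_, ?_⟩, ?_, ?_⟩ <;> linarith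

lemma Fword_cons (i : Fin 3) (w : List (Fin 3)) : Fword (i :: w) = Fmap i ∘ Fword w := rfl

lemma mem_V_zero {x : ℝ × ℝ} : x ∈ V 0 ↔ ∃ i, x = q i := by
  simp [V, Fword]

lemma mem_V_succ {m : ℕ} {x : ℝ × ℝ} : x ∈ V (m + 1) ↔ ∃ i, ∃ y ∈ V m, x = Fmap i y := by
  constructor
  · rintro ⟨_ | ⟨i, w⟩, hw, j, rfl⟩
    · simp at hw
    · exact ⟨i, Fword w (q j), ⟨w, by simpa using hw, j, rfl⟩, rfl⟩
  · rintro ⟨i, y, ⟨w, hw, j, rfl⟩, rfl⟩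
    exact ⟨i :: w, by simp [hw], j, rfl⟩

lemma q_mem_V (i : Fin 3) (m : ℕ) : q i ∈ V m := by
  induction m with
  | zero => exact mem_V_zero.2 ⟨i, rfl⟩
  | succ m ih => exact mem_V_succ.2 ⟨i, q i, ih, (Fmap_q_self i).symm⟩

lemma V_subset_triangle (m : ℕ) : V m ⊆ triangle := by
  induction m with
  | zero =>
    intro x hx
    obtain ⟨i, rfl⟩ := mem_V_zero.1 hx
    exact q_mem_triangle i
  | succ m ih =>
    intro x hx
    obtain ⟨i, y, hy, rfl⟩ := mem_V_succ.1 hx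
    exact Fmap_mem_triangle i (ih hy)

lemma Nbr.mem_V {m : ℕ} {x y : ℝ × ℝ} (h : Nbr m x y) : x ∈ V m ∧ y ∈ V m := by
  obtain ⟨_, w, hw, ⟨i, hx⟩, ⟨j, hy⟩⟩ := h
  exact ⟨⟨w, hw, i, hx⟩, ⟨w, hw, j, hy⟩⟩

lemma isEdge_zero {e : Sym2 (ℝ × ℝ)} : IsEdge 0 e ↔ ∃ i j, i ≠ j ∧ e = s(q i, q j) := by
  constructor
  · rintro ⟨x, y, ⟨hxy, w, hw, ⟨i, rfl⟩, ⟨j, rfl⟩⟩, rfl⟩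
    obtain rfl := List.length_eq_zero_iff.1 hw
    exact ⟨i, j, fun h => hxy (h ▸ rfl), rfl⟩
  · rintro ⟨i, j, hij, rfl⟩
    exact ⟨q i, q j, ⟨q_injective.ne hij, [], rfl, ⟨i, rfl⟩, ⟨j, rfl⟩⟩, rfl⟩

lemma isEdge_succ {m : ℕ} {e : Sym2 (ℝ × ℝ)} :
    IsEdge (m + 1) e ↔ ∃ i, ∃ e', IsEdge m e' ∧ Sym2.map (Fmap i) e' = e := by
  constructor
  · rintro ⟨x, y, ⟨hxy, _ | ⟨i, w⟩, hw, ⟨a, rfl⟩, ⟨b, rfl⟩⟩, rfl⟩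
    · simp at hw
    · refine ⟨i, s(Fword w (q a), Fword w (q b)), ⟨_, _, ⟨fun h => hxy ?_, w, by simpa using hw,
        ⟨a, rfl⟩, ⟨b, rfl⟩⟩, rfl⟩, rfl⟩
      simp [Fword_cons, h]
  · rintro ⟨i, _, ⟨x, y, ⟨hxy, w, hw, ⟨a, rfl⟩, ⟨b, rfl⟩⟩, rfl⟩, rfl⟩
    exact ⟨_, _, ⟨(Fmap_injective i).ne hxy, i :: w, by simp [hw], ⟨a, rfl⟩, ⟨b, rfl⟩⟩, rfl⟩

lemma finite_setOf_isEdge (m : ℕ) : {e | IsEdge m e}.Finite := by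
  induction m with
  | zero =>
    refine (Set.finite_range fun p : Fin 3 × Fin 3 => s(q p.1, q p.2)).subset ?_
    intro e he
    obtain ⟨i, j, -, rfl⟩ := isEdge_zero.1 he
    exact ⟨(i, j), rfl⟩
  | succ m ih =>
    refine (Set.finite_iUnion fun i : Fin 3 => ih.image (Sym2.map (Fmap i))).subset ?_
    intro e he
    obtain ⟨i, e', he', rfl⟩ := isEdge_succ.1 he
    exact Set.mem_iUnion.2 ⟨i, e', he', rfl⟩

def edges (m : ℕ) : Finset (Sym2 (ℝ × ℝ)) := (finite_setOf_isEdge m).toFinset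

lemma mem_edges {m : ℕ} {e : Sym2 (ℝ × ℝ)} : e ∈ edges m ↔ IsEdge m e := by
  simp [edges]

lemma energy_eq_sum (m : ℕ) (u : ℝ × ℝ → ℝ) :
    Energy m u = (5 / 3) ^ m * ∑ e ∈ edges m, edgeVal u e := by
  rw [Energy]
  congr 1
  refine (tsum_subtype {e | IsEdge m e} (edgeVal u)).trans ?_
  rw [tsum_eq_sum (s := edges m) fun e he =>
    Set.indicator_of_notMem (by simpa [mem_edges] using he) _]
  exact Finset.sum_congr rfl fun e he =>
    Set.indicator_of_mem (s := {e | IsEdge m e}) (mem_edges.1 he) _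

lemma edges_succ (m : ℕ) :
    edges (m + 1) = Finset.univ.biUnion fun i => (edges m).image (Sym2.map (Fmap i)) := by
  ext e
  simp [mem_edges, isEdge_succ]

lemma disjoint_image_edges {m : ℕ} {i j : Fin 3} (hij : i ≠ j) :
    Disjoint ((edges m).image (Sym2.map (Fmap i))) ((edges m).image (Sym2.map (Fmap j))) := by
  rw [Finset.disjoint_left]
  rintro _ hi hj
  obtain ⟨_, he, rfl⟩ := Finset.mem_image.1 hi
  obtain ⟨_, he', heq⟩ := Finset.mem_image.1 hj
  obtain ⟨x, y, hxy, rfl⟩ := mem_edges.1 he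
  obtain ⟨z, w, hzw, rfl⟩ := mem_edges.1 he'
  have hT := V_subset_triangle m
  obtain ⟨hx, hy⟩ := hxy.mem_V
  obtain ⟨hz, hw⟩ := hzw.mem_V
  simp only [Sym2.map_mk, Sym2.eq_iff] at heq
  rcases heq with ⟨h1, h2⟩ | ⟨h1, h2⟩
  · exact hxy.1 ((Fmap_eq_Fmap_of_ne hij (hT hx) (hT hz) h1.symm).1.trans
      (Fmap_eq_Fmap_of_ne hij (hT hy) (hT hw) h2.symm).1.symm)
  · exact hxy.1 ((Fmap_eq_Fmap_of_ne hij (hT hx) (hT hw) h2.symm).1.trans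
      (Fmap_eq_Fmap_of_ne hij (hT hy) (hT hz) h1.symm).1.symm)

lemma edgeVal_map (u : ℝ × ℝ → ℝ) (f : ℝ × ℝ → ℝ × ℝ) (e : Sym2 (ℝ × ℝ)) :
    edgeVal u (Sym2.map f e) = edgeVal (u ∘ f) e := by
  induction e using Sym2.ind with
  | _ x y => rfl

lemma energy_succ (m : ℕ) (u : ℝ × ℝ → ℝ) :
    Energy (m + 1) u = 5 / 3 * ∑ i, Energy m (u ∘ Fmap i) := by
  simp only [energy_eq_sum, edges_succ, Finset.mul_sum]
  rw [Finset.sum_biUnion fun i _ j _ hij => disjoint_image_edges hij, pow_succ']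
  refine Finset.sum_congr rfl fun i _ => ?_
  rw [Finset.sum_image fun _ _ _ _ h => Sym2.map.injective (Fmap_injective i) h]
  simp only [edgeVal_map, mul_assoc]

lemma energy_congr {m : ℕ} {u v : ℝ × ℝ → ℝ} (h : Set.EqOn u v (V m)) :
    Energy m u = Energy m v := by
  rw [energy_eq_sum, energy_eq_sum]
  refine congrArg _ (Finset.sum_congr rfl fun e he => ?_)
  obtain ⟨x, y, hxy, rfl⟩ := mem_edges.1 he
  simp [edgeVal, h hxy.mem_V.1, h hxy.mem_V.2]

lemma exists_glue (n : ℕ) (w : Fin 3 → ℝ × ℝ → ℝ) (hw : ∀ i j, w i (q j) = w j (q i)) :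
    ∃ u : ℝ × ℝ → ℝ, (∀ i, ∀ y ∈ V n, u (Fmap i y) = w i y) ∧
      Energy (n + 1) u = 5 / 3 * ∑ i, Energy n (w i) := by
  classical
  let u : ℝ × ℝ → ℝ := fun z =>
    if h : ∃ i, ∃ y ∈ V n, z = Fmap i y then w h.choose h.choose_spec.choose else 0
  have hu : ∀ i, ∀ y ∈ V n, u (Fmap i y) = w i y := by
    intro i y hy
    -- Two cells meet only in a shared corner, where `hw` makes the pieces agree.
    have key : ∀ j, ∀ b ∈ V n, Fmap i y = Fmap j b → w j b = w i y := by
      intro j b hb hFb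
      by_cases hij : i = j
      · subst hij
        rw [Fmap_injective i hFb]
      · obtain ⟨rfl, rfl⟩ :=
          Fmap_eq_Fmap_of_ne hij (V_subset_triangle n hy) (V_subset_triangle n hb) hFb
        exact hw j i
    have h : ∃ j, ∃ b ∈ V n, Fmap i y = Fmap j b := ⟨i, y, hy, rfl⟩
    simp only [u, dif_pos h]
    exact key _ _ h.choose_spec.choose_spec.1 h.choose_spec.choose_spec.2
  refine ⟨u, hu, ?_⟩
  rw [energy_succ]
  congr 1
  exact Finset.sum_congr rfl fun i _ => energy_congr fun y hy => hu i y hy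

def cornerEnergy (v : Fin 3 → ℝ) : ℝ := (v 0 - v 1) ^ 2 + (v 0 - v 2) ^ 2 + (v 1 - v 2) ^ 2

lemma energy_zero (u : ℝ × ℝ → ℝ) : Energy 0 u = cornerEnergy (u ∘ q) := by
  have hedges : edges 0 = {s(q 0, q 1), s(q 0, q 2), s(q 1, q 2)} := by
    ext e
    simp only [mem_edges, isEdge_zero, Finset.mem_insert, Finset.mem_singleton]
    constructor
    · rintro ⟨i, j, hij, rfl⟩
      fin_cases i <;> fin_cases j <;> simp_all [Sym2.eq_swap]
    · rintro (rfl | rfl | rfl) <;> exact ⟨_, _, by decide, rfl⟩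
  have h01 := q_injective.ne (show (0 : Fin 3) ≠ 1 by decide)
  have h02 := q_injective.ne (show (0 : Fin 3) ≠ 2 by decide)
  have h12 := q_injective.ne (show (1 : Fin 3) ≠ 2 by decide)
  rw [energy_eq_sum, hedges, Finset.sum_insert, Finset.sum_insert, Finset.sum_singleton]
  · simp [edgeVal, cornerEnergy, add_assoc]
  · simp [h01, h02, h12.symm]
  · simp [h01, h02, h12, h01.symm]

-- `Energy 1 u - Energy 0 u` is a nonnegative quadratic form in the deviations of the midpoint
-- values `x, y, z` from their harmonic values `(2 a + 2 p + r) / 5`, ….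
lemma energy_zero_le_energy_one (u : ℝ × ℝ → ℝ) : Energy 0 u ≤ Energy 1 u := by
  rw [energy_succ, Fin.sum_univ_three]
  simp only [energy_zero, cornerEnergy, Function.comp_apply, Fmap_q_self, Fmap_q_comm 1 0,
    Fmap_q_comm 2 0, Fmap_q_comm 2 1]
  set a := u (q 0)
  set p := u (q 1)
  set r := u (q 2)
  set x := u (Fmap 0 (q 1))
  set y := u (Fmap 0 (q 2))
  set z := u (Fmap 1 (q 2))
  nlinarith [sq_nonneg (x - (2 * a + 2 * p + r) / 5), sq_nonneg (y - (2 * a + 2 * r + p) / 5),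
    sq_nonneg (z - (a + 2 * p + 2 * r) / 5),
    sq_nonneg ((x - (2 * a + 2 * p + r) / 5) - (y - (2 * a + 2 * r + p) / 5)),
    sq_nonneg ((x - (2 * a + 2 * p + r) / 5) - (z - (a + 2 * p + 2 * r) / 5)),
    sq_nonneg ((y - (2 * a + 2 * r + p) / 5) - (z - (a + 2 * p + 2 * r) / 5))]

lemma energy_zero_le (n : ℕ) (u : ℝ × ℝ → ℝ) : Energy 0 u ≤ Energy n u := by
  induction n generalizing u with
  | zero => exact le_rfl
  | succ n ih =>
    calc Energy 0 u ≤ Energy 1 u := energy_zero_le_energy_one u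
      _ = 5 / 3 * ∑ i, Energy 0 (u ∘ Fmap i) := energy_succ 0 u
      _ ≤ 5 / 3 * ∑ i, Energy n (u ∘ Fmap i) := by gcongr with i; exact ih _
      _ = Energy (n + 1) u := (energy_succ n u).symm

/-- The harmonic extension: a value `(2 v i + 2 v j + v k) / 5` at the midpoint of each side. -/
lemma exists_energy_eq_cornerEnergy (n : ℕ) (v : Fin 3 → ℝ) :
    ∃ u : ℝ × ℝ → ℝ, u ∘ q = v ∧ Energy n u = cornerEnergy v := by
  induction n generalizing v with
  | zero =>
    refine ⟨fun z => v (Function.invFun q z), ?_, ?_⟩ <;>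
      simp only [energy_zero, Function.comp_def, Function.leftInverse_invFun q_injective _]
  | succ n ih =>
    let piece : Fin 3 → Fin 3 → ℝ := fun i j =>
      if j = i then v i else (v 0 + v 1 + v 2 + v i + v j) / 5
    choose w hwq hwE using fun i => ih (piece i)
    have hw : ∀ i j, w i (q j) = w j (q i) := by
      intro i j
      rw [← Function.comp_apply (f := w i), hwq, ← Function.comp_apply (f := w j), hwq]
      by_cases hij : i = j
      · rw [hij]
      · simp only [piece, hij, Ne.symm hij, if_false]
        ring
    obtain ⟨u, hu, hE⟩ := exists_glue n w hw
    refine ⟨u, funext fun i => ?_, ?_⟩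
    · rw [Function.comp_apply, ← Fmap_q_self i, hu i _ (q_mem_V i n),
        ← Function.comp_apply (f := w i), hwq]
      simp [piece]
    · rw [hE, Fin.sum_univ_three, hwE, hwE, hwE]
      simp only [cornerEnergy, piece, ↓reduceIte, one_ne_zero, zero_ne_one, Fin.reduceEq]
      ring

def reflect (z : ℝ × ℝ) : ℝ × ℝ := (1 - z.1, z.2)

lemma reflect_involutive : Function.Involutive reflect := fun z => by simp [reflect]

lemma reflect_q (i : Fin 3) : reflect (q i) = q (Equiv.swap 1 2 i) := by
  fin_cases i <;> norm_num [Equiv.swap_apply_def, reflect, q, Fin.ext_iff]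

lemma reflect_Fmap (i : Fin 3) (z : ℝ × ℝ) :
    reflect (Fmap i z) = Fmap (Equiv.swap 1 2 i) (reflect z) := by
  rw [Fmap_apply, Fmap_apply, ← reflect_q]
  simp only [reflect, Prod.mk.injEq, and_true]
  ring

lemma energy_comp_reflect (n : ℕ) (u : ℝ × ℝ → ℝ) : Energy n (u ∘ reflect) = Energy n u := by
  induction n generalizing u with
  | zero =>
    simp only [energy_zero, cornerEnergy, Function.comp_apply, reflect_q]
    rw [Equiv.swap_apply_left, Equiv.swap_apply_right,
      Equiv.swap_apply_of_ne_of_ne (by decide) (by decide)]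
    ring
  | succ n ih =>
    have hcomp : ∀ i, (u ∘ reflect) ∘ Fmap i = (u ∘ Fmap (Equiv.swap 1 2 i)) ∘ reflect := fun i =>
      funext fun z => congrArg u (reflect_Fmap i z)
    simp only [energy_succ, hcomp, ih]
    rw [Equiv.sum_comp (Equiv.swap 1 2) fun i => Energy n (u ∘ Fmap i)]

lemma Q_comp_of_involutive {m : ℕ} {E : Set (ℝ × ℝ)} {σ : ℝ × ℝ → ℝ × ℝ}
    (hσ : Function.Involutive σ) (hE : Set.MapsTo σ E E)
    (hEσ : ∀ u, Energy m (u ∘ σ) = Energy m u) (v : ℝ × ℝ → ℝ) : Q m E (v ∘ σ) = Q m E v := by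
  unfold Q
  congr 1
  ext r
  constructor <;> rintro ⟨u, hu, rfl⟩ <;> refine ⟨u ∘ σ, fun x hx => ?_, (hEσ u).symm⟩
  · simp [hu (σ x) (hE hx), hσ x]
  · simp [hu (σ x) (hE hx)]

lemma ind_comp_of_involutive {σ : ℝ × ℝ → ℝ × ℝ} (hσ : Function.Involutive σ) (x : ℝ × ℝ) :
    ind x ∘ σ = ind (σ x) := by
  ext z
  simp only [ind, Function.comp_apply, hσ.eq_iff.symm]

lemma cond_comp_of_involutive {m : ℕ} {E : Set (ℝ × ℝ)} {σ : ℝ × ℝ → ℝ × ℝ}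
    (hσ : Function.Involutive σ) (hE : Set.MapsTo σ E E)
    (hEσ : ∀ u, Energy m (u ∘ σ) = Energy m u) (x y : ℝ × ℝ) :
    cond m E (σ x) (σ y) = cond m E x y := by
  simp only [cond, ← ind_comp_of_involutive hσ, ← Pi.add_comp, Q_comp_of_involutive hσ hE hEσ]

lemma cond_comm (m : ℕ) (E : Set (ℝ × ℝ)) (x y : ℝ × ℝ) : cond m E x y = cond m E y x := by
  simp only [cond, add_comm (ind x), add_comm (Q m E (ind x))]

lemma xb_eq (n j : ℕ) : xb n j = ((j : ℝ) / 2 ^ n, 0) := by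
  simp [xb, q]

lemma xb_zero (n : ℕ) : xb n 0 = q 1 := by
  simp [xb_eq, q]

lemma xb_two_pow (n : ℕ) : xb n (2 ^ n) = q 2 := by
  simp [xb_eq, q]

lemma xb_injective (n : ℕ) : Function.Injective (xb n) := by
  intro j k h
  simp only [xb_eq, Prod.mk.injEq, and_true] at h
  exact_mod_cast (div_left_inj' (by positivity)).1 h

lemma Fmap_one_xb (n j : ℕ) : Fmap 1 (xb n j) = xb (n + 1) j := by
  simp only [xb_eq, Fmap_apply, q, Prod.mk.injEq, pow_succ]
  constructor <;> ring

lemma Fmap_two_xb (n j : ℕ) : Fmap 2 (xb n j) = xb (n + 1) (j + 2 ^ n) := by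
  simp only [xb_eq, Fmap_apply, q, Prod.mk.injEq, pow_succ, add_zero, zero_div, and_true]
  push_cast
  field_simp

lemma reflect_xb {n j : ℕ} (hj : j ≤ 2 ^ n) : reflect (xb n j) = xb n (2 ^ n - j) := by
  simp only [xb_eq, reflect, Nat.cast_sub hj, Nat.cast_pow, Nat.cast_ofNat, Prod.mk.injEq, and_true]
  field_simp

lemma xb_mem_V (n : ℕ) {j : ℕ} (hj : j ≤ 2 ^ n) : xb n j ∈ V n := by
  induction n generalizing j with
  | zero =>
    interval_cases j
    · rw [xb_zero]; exact q_mem_V 1 0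
    · rw [← pow_zero 2, xb_two_pow]; exact q_mem_V 2 0
  | succ n ih =>
    rcases le_or_gt j (2 ^ n) with h | h
    · exact mem_V_succ.2 ⟨1, _, ih h, (Fmap_one_xb n j).symm⟩
    · refine mem_V_succ.2 ⟨2, _, ih (j := j - 2 ^ n) (by omega), ?_⟩
      rw [Fmap_two_xb, Nat.sub_add_cancel h.le]

lemma Ebot_subset_V (n : ℕ) : Ebot n ⊆ V n := by
  rintro _ ⟨j, hj, rfl⟩
  exact xb_mem_V n hj

lemma Ebot_subset_triangle (n : ℕ) : Ebot n ⊆ triangle :=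
  (Ebot_subset_V n).trans (V_subset_triangle n)

lemma Ebot_zero : Ebot 0 = {q 1, q 2} := by
  ext x
  constructor
  · rintro ⟨j, hj, rfl⟩
    interval_cases j
    · simp [xb_zero]
    · simp [← xb_two_pow 0]
  · rintro (rfl | rfl)
    · exact ⟨0, zero_le_one, (xb_zero 0).symm⟩
    · exact ⟨1, le_rfl, (xb_two_pow 0).symm⟩

lemma q_one_mem_Ebot (n : ℕ) : q 1 ∈ Ebot n := ⟨0, Nat.zero_le _, (xb_zero n).symm⟩

lemma q_two_mem_Ebot (n : ℕ) : q 2 ∈ Ebot n := ⟨2 ^ n, le_rfl, (xb_two_pow n).symm⟩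

lemma Fmap_one_mem_Ebot {n : ℕ} {y : ℝ × ℝ} (hy : y ∈ Ebot n) : Fmap 1 y ∈ Ebot (n + 1) := by
  obtain ⟨j, hj, rfl⟩ := hy
  exact ⟨j, by rw [pow_succ]; omega, Fmap_one_xb n j⟩

lemma Fmap_two_mem_Ebot {n : ℕ} {y : ℝ × ℝ} (hy : y ∈ Ebot n) : Fmap 2 y ∈ Ebot (n + 1) := by
  obtain ⟨j, hj, rfl⟩ := hy
  exact ⟨j + 2 ^ n, by rw [pow_succ]; omega, Fmap_two_xb n j⟩

lemma exists_mem_Ebot_of_mem_Ebot_succ {n : ℕ} {x : ℝ × ℝ} (hx : x ∈ Ebot (n + 1)) :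
    ∃ y ∈ Ebot n, x = Fmap 1 y ∨ x = Fmap 2 y := by
  obtain ⟨j, hj, rfl⟩ := hx
  rcases le_or_gt j (2 ^ n) with h | h
  · exact ⟨xb n j, ⟨j, h, rfl⟩, Or.inl (Fmap_one_xb n j).symm⟩
  · refine ⟨xb n (j - 2 ^ n), ⟨j - 2 ^ n, by rw [pow_succ] at hj; omega, rfl⟩, Or.inr ?_⟩
    rw [Fmap_two_xb, Nat.sub_add_cancel h.le]

lemma xb_ne_q_zero (n j : ℕ) : xb n j ≠ q 0 := fun h => by
  have h2 : (0 : ℝ) = √3 / 2 := by simpa [xb_eq, q] using congrArg Prod.snd h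
  linarith [sqrt_three_pos]

lemma reflect_mapsTo_Eplus (n : ℕ) : Set.MapsTo reflect (Eplus n) (Eplus n) := by
  rintro _ (rfl | ⟨j, hj, rfl⟩)
  · exact Or.inl (by norm_num [reflect, q])
  · exact Or.inr ⟨2 ^ n - j, Nat.sub_le _ _, reflect_xb hj⟩

lemma cond_reflect_xb (n : ℕ) {i j : ℕ} (hi : i ≤ 2 ^ n) (hj : j ≤ 2 ^ n) :
    cond n (Eplus n) (xb n (2 ^ n - i)) (xb n (2 ^ n - j)) =
      cond n (Eplus n) (xb n i) (xb n j) := by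
  rw [← reflect_xb hi, ← reflect_xb hj]
  exact cond_comp_of_involutive reflect_involutive (reflect_mapsTo_Eplus n)
    (energy_comp_reflect n) _ _

def HasTrace (n : ℕ) (b : ℝ × ℝ → ℝ) (α β S : ℝ) : Prop :=
  ∀ s, IsLeast (Energy n '' {u | u (q 0) = s ∧ Set.EqOn u b (Ebot n)}) (α - 2 * β * s + S * s ^ 2)

def nextS (S : ℝ) : ℝ := 10 / 3 * S / (S + 1)

def nextBeta (S βL βR : ℝ) : ℝ := 5 / 3 * (βL + βR) / (S + 1)

def nextAlpha (S αL βL αR βR : ℝ) : ℝ :=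
  5 / 3 * (αL + αR - ((S + 2) * (βL ^ 2 + βR ^ 2) + 2 * βL * βR) / ((S + 1) * (S + 3)))

/-- The energy-minimising value at the midpoint `Fmap 1 (q 0)` of the left side. -/
def midValue (S βL βR s : ℝ) : ℝ := ((S + 2) * (βL + s) + (βR + s)) / ((S + 1) * (S + 3))

/-- Completing the square in the values `x`, `y` at the midpoints of the two slanted sides. -/
lemma energy_split_eq {S : ℝ} (h1 : S + 1 ≠ 0) (h3 : S + 3 ≠ 0) (αL βL αR βR s x y : ℝ) :
    5 / 3 * ((s - x) ^ 2 + (s - y) ^ 2 + (x - y) ^ 2 + (αL - 2 * βL * x + S * x ^ 2) +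
        (αR - 2 * βR * y + S * y ^ 2)) =
      nextAlpha S αL βL αR βR - 2 * nextBeta S βL βR * s + nextS S * s ^ 2 +
        5 / 3 * ((S + 1) * ((x - midValue S βL βR s) ^ 2 + (y - midValue S βR βL s) ^ 2) +
          (x - midValue S βL βR s - (y - midValue S βR βL s)) ^ 2) := by
  unfold nextAlpha nextBeta nextS midValue
  field_simp
  ring

lemma glue_compat {a b c : ℝ × ℝ → ℝ} (hab : a (q 1) = b (q 0)) (hac : a (q 2) = c (q 0))
    (hbc : b (q 2) = c (q 1)) (i j : Fin 3) : ![a, b, c] i (q j) = ![a, b, c] j (q i) := by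
  fin_cases i <;> fin_cases j <;> simp [hab, hac, hbc]

lemma cornerEnergy_vec (a b c : ℝ) :
    cornerEnergy ![a, b, c] = (a - b) ^ 2 + (a - c) ^ 2 + (b - c) ^ 2 :=
  rfl

lemma HasTrace.mem_image_succ {n : ℕ} {b bL bR : ℝ × ℝ → ℝ} {αL βL αR βR S : ℝ} (hS : 0 ≤ S)
    (hL : HasTrace n bL αL βL S) (hR : HasTrace n bR αR βR S)
    (hbL : Set.EqOn (b ∘ Fmap 1) bL (Ebot n)) (hbR : Set.EqOn (b ∘ Fmap 2) bR (Ebot n)) (s : ℝ) :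
    nextAlpha S αL βL αR βR - 2 * nextBeta S βL βR * s + nextS S * s ^ 2 ∈
      Energy (n + 1) '' {u | u (q 0) = s ∧ Set.EqOn u b (Ebot (n + 1))} := by
  set x := midValue S βL βR s
  set y := midValue S βR βL s
  obtain ⟨uL, ⟨huL0, huLb⟩, huLE⟩ := (hL x).1
  obtain ⟨uR, ⟨huR0, huRb⟩, huRE⟩ := (hR y).1
  obtain ⟨uT, huTq, huTE⟩ := exists_energy_eq_cornerEnergy n ![s, x, y]
  have huT : ∀ i, uT (q i) = ![s, x, y] i := fun i => congrFun huTq i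
  have hLR : uL (q 2) = uR (q 1) := by
    rw [huLb (q_two_mem_Ebot n), huRb (q_one_mem_Ebot n), ← hbL (q_two_mem_Ebot n),
      ← hbR (q_one_mem_Ebot n), Function.comp_apply, Function.comp_apply, Fmap_q_comm]
  obtain ⟨u, hu, huE⟩ := exists_glue n ![uT, uL, uR]
    (glue_compat (by simp [huT 1, huL0]) (by simp [huT 2, huR0]) hLR)
  refine ⟨u, ⟨?_, fun z hz => ?_⟩, ?_⟩
  · have h0 := hu 0 (q 0) (q_mem_V 0 n)
    rw [Fmap_q_self] at h0
    simpa [huT 0] using h0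
  · obtain ⟨w, hw, rfl | rfl⟩ := exists_mem_Ebot_of_mem_Ebot_succ hz
    · rw [hu 1 w (Ebot_subset_V n hw)]
      simpa using (huLb hw).trans (hbL hw).symm
    · rw [hu 2 w (Ebot_subset_V n hw)]
      simpa using (huRb hw).trans (hbR hw).symm
  · have hsum : ∑ i, Energy n (![uT, uL, uR] i) =
        cornerEnergy ![s, x, y] + Energy n uL + Energy n uR := by
      simp [Fin.sum_univ_three, huTE]
    rw [huE, hsum, huLE, huRE, cornerEnergy_vec, energy_split_eq (by linarith) (by linarith)]
    simp [x, y]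

lemma HasTrace.mem_lowerBounds_succ {n : ℕ} {b bL bR : ℝ × ℝ → ℝ} {αL βL αR βR S : ℝ}
    (hS : 0 ≤ S) (hL : HasTrace n bL αL βL S) (hR : HasTrace n bR αR βR S)
    (hbL : Set.EqOn (b ∘ Fmap 1) bL (Ebot n)) (hbR : Set.EqOn (b ∘ Fmap 2) bR (Ebot n)) (s : ℝ) :
    nextAlpha S αL βL αR βR - 2 * nextBeta S βL βR * s + nextS S * s ^ 2 ∈
      lowerBounds (Energy (n + 1) '' {u | u (q 0) = s ∧ Set.EqOn u b (Ebot (n + 1))}) := by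
  rintro _ ⟨u, ⟨hu0, hub⟩, rfl⟩
  set x := u (Fmap 1 (q 0))
  set y := u (Fmap 2 (q 0))
  have hLx := (hL x).2
    ⟨u ∘ Fmap 1, ⟨rfl, fun z hz => (hub (Fmap_one_mem_Ebot hz)).trans (hbL hz)⟩, rfl⟩
  have hRy := (hR y).2
    ⟨u ∘ Fmap 2, ⟨rfl, fun z hz => (hub (Fmap_two_mem_Ebot hz)).trans (hbR hz)⟩, rfl⟩
  have hT := energy_zero_le n (u ∘ Fmap 0)
  rw [energy_zero, cornerEnergy] at hT
  simp only [Function.comp_apply, Fmap_q_self, Fmap_q_comm 0 1, Fmap_q_comm 0 2, hu0] at hT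
  have hsq : 0 ≤ (S + 1) * ((x - midValue S βL βR s) ^ 2 + (y - midValue S βR βL s) ^ 2) +
      (x - midValue S βL βR s - (y - midValue S βR βL s)) ^ 2 :=
    add_nonneg (mul_nonneg (by linarith) (by positivity)) (sq_nonneg _)
  rw [energy_succ, Fin.sum_univ_three]
  linarith [energy_split_eq (S := S) (by linarith) (by linarith) αL βL αR βR s x y]

theorem HasTrace.succ {n : ℕ} {b bL bR : ℝ × ℝ → ℝ} {αL βL αR βR S : ℝ} (hS : 0 ≤ S)
    (hL : HasTrace n bL αL βL S) (hR : HasTrace n bR αR βR S)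
    (hbL : Set.EqOn (b ∘ Fmap 1) bL (Ebot n)) (hbR : Set.EqOn (b ∘ Fmap 2) bR (Ebot n)) :
    HasTrace (n + 1) b (nextAlpha S αL βL αR βR) (nextBeta S βL βR) (nextS S) := fun s =>
  ⟨hL.mem_image_succ hS hR hbL hbR s, hL.mem_lowerBounds_succ hS hR hbL hbR s⟩

lemma hasTrace_zero (b : ℝ × ℝ → ℝ) :
    HasTrace 0 b (b (q 1) ^ 2 + b (q 2) ^ 2 + (b (q 1) - b (q 2)) ^ 2) (b (q 1) + b (q 2)) 2 := by
  have hEbot : ∀ u, Set.EqOn u b (Ebot 0) ↔ u (q 1) = b (q 1) ∧ u (q 2) = b (q 2) := by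
    simp [Ebot_zero, Set.EqOn]
  intro s
  constructor
  · obtain ⟨u, hu, huE⟩ := exists_energy_eq_cornerEnergy 0 ![s, b (q 1), b (q 2)]
    refine ⟨u, ⟨congrFun hu 0, (hEbot u).2 ⟨congrFun hu 1, congrFun hu 2⟩⟩, ?_⟩
    rw [huE, cornerEnergy_vec]
    ring
  · rintro _ ⟨u, ⟨hu0, hub⟩, rfl⟩
    obtain ⟨hu1, hu2⟩ := (hEbot u).1 hub
    rw [energy_zero, cornerEnergy]
    simp only [Function.comp_apply, hu0, hu1, hu2]
    exact le_of_eq (by ring)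

lemma HasTrace.Q_eq {n : ℕ} {v : ℝ × ℝ → ℝ} {α β S : ℝ} (h : HasTrace n v α β S)
    (hv : v (q 0) = 0) : Q n (Eplus n) v = α := by
  have hset : {r | ∃ u : ℝ × ℝ → ℝ, (∀ x ∈ Eplus n, u x = v x) ∧ r = Energy n u} =
      Energy n '' {u | u (q 0) = 0 ∧ Set.EqOn u v (Ebot n)} := by
    ext r
    constructor
    · rintro ⟨u, hu, rfl⟩
      exact ⟨u, ⟨(hu _ (Set.mem_insert _ _)).trans hv,
        fun x hx => hu x (Set.mem_insert_of_mem _ hx)⟩, rfl⟩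
    · rintro ⟨u, ⟨hu0, hub⟩, rfl⟩
      refine ⟨u, ?_, rfl⟩
      rintro x (rfl | hx)
      exacts [hu0.trans hv.symm, hub hx]
  rw [Q, hset, (h 0).csInf_eq]
  ring

lemma cond_eq_of_hasTrace {n : ℕ} {x y : ℝ × ℝ} (hx : x ≠ q 0) (hy : y ≠ q 0)
    {α₁ β₁ S₁ α₂ β₂ S₂ α₁₂ β₁₂ S₁₂ : ℝ} (h₁ : HasTrace n (ind x) α₁ β₁ S₁)
    (h₂ : HasTrace n (ind y) α₂ β₂ S₂) (h₁₂ : HasTrace n (ind x + ind y) α₁₂ β₁₂ S₁₂) :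
    cond n (Eplus n) x y = (α₁ + α₂ - α₁₂) / 2 := by
  have hx0 : ind x (q 0) = 0 := if_neg hx.symm
  have hy0 : ind y (q 0) = 0 := if_neg hy.symm
  rw [cond, h₁.Q_eq hx0, h₂.Q_eq hy0, h₁₂.Q_eq (by simp [hx0, hy0])]

lemma ind_Fmap_comp_Fmap (i : Fin 3) (p : ℝ × ℝ) : ind (Fmap i p) ∘ Fmap i = ind p := by
  ext z
  simp [ind, (Fmap_injective i).eq_iff]

lemma ind_q_comp_Fmap_self (i : Fin 3) : ind (q i) ∘ Fmap i = ind (q i) := by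
  simpa [Fmap_q_self] using ind_Fmap_comp_Fmap i (q i)

lemma ind_Fmap_comp_Fmap_of_ne {i j : Fin 3} (hij : i ≠ j) {p : ℝ × ℝ} (hp : p ∈ triangle)
    (hpj : p ≠ q j) : Set.EqOn (ind (Fmap i p) ∘ Fmap j) 0 triangle := by
  intro z hz
  simp only [ind, Function.comp_apply, Pi.zero_apply, ite_eq_right_iff, one_ne_zero]
  exact fun h => hpj (Fmap_eq_Fmap_of_ne hij hp hz h.symm).1

lemma q_one_ne_q_two : q 1 ≠ q 2 := q_injective.ne (by decide)

lemma hasTrace_zero_zero : HasTrace 0 0 0 0 2 := by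
  simpa using hasTrace_zero 0

lemma hasTrace_zero_ind_q_one : HasTrace 0 (ind (q 1)) 2 1 2 := by
  convert hasTrace_zero (ind (q 1)) using 1 <;> norm_num [ind, q_one_ne_q_two.symm]

lemma hasTrace_zero_ind_q_two : HasTrace 0 (ind (q 2)) 2 1 2 := by
  convert hasTrace_zero (ind (q 2)) using 1 <;> norm_num [ind, q_one_ne_q_two]

lemma hasTrace_zero_ind_q_one_add_ind_q_two : HasTrace 0 (ind (q 1) + ind (q 2)) 2 2 2 := by
  convert hasTrace_zero (ind (q 1) + ind (q 2)) using 1 <;>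
    norm_num [ind, q_one_ne_q_two, q_one_ne_q_two.symm]

def sCoeff (n : ℕ) : ℝ := 14 * 10 ^ n / (6 * 10 ^ n + 3 ^ n)

def betaCorner (n : ℕ) : ℝ := 7 * 5 ^ n / (6 * 10 ^ n + 3 ^ n)

/-- Valid from level `1` on; at level `0` the neighbour of `q 2` is the corner `q 1`. -/
def betaNearCorner (n : ℕ) : ℝ := 14 * 5 ^ n / (6 * 10 ^ n + 3 ^ n)

lemma sCoeff_nonneg (n : ℕ) : 0 ≤ sCoeff n := by
  unfold sCoeff
  positivity

lemma sCoeff_zero : sCoeff 0 = 2 := by norm_num [sCoeff]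

lemma betaCorner_zero : betaCorner 0 = 1 := by norm_num [betaCorner]

lemma nextS_sCoeff (n : ℕ) : nextS (sCoeff n) = sCoeff (n + 1) := by
  have : (0 : ℝ) < 6 * 10 ^ n + 3 ^ n := by positivity
  unfold nextS sCoeff
  rw [pow_succ, pow_succ]
  field_simp
  ring

lemma nextBeta_comm (S β β' : ℝ) : nextBeta S β β' = nextBeta S β' β := by
  rw [nextBeta, nextBeta, add_comm]

lemma nextBeta_betaCorner (n : ℕ) :
    nextBeta (sCoeff n) (betaCorner n) 0 = betaCorner (n + 1) := by
  have : (0 : ℝ) < 6 * 10 ^ n + 3 ^ n := by positivity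
  unfold nextBeta sCoeff betaCorner
  rw [pow_succ, pow_succ, pow_succ]
  field_simp
  ring

lemma nextBeta_betaNearCorner (n : ℕ) :
    nextBeta (sCoeff n) 0 (betaNearCorner n) = betaNearCorner (n + 1) := by
  have : (0 : ℝ) < 6 * 10 ^ n + 3 ^ n := by positivity
  unfold nextBeta sCoeff betaNearCorner
  rw [pow_succ, pow_succ, pow_succ]
  field_simp
  ring

lemma nextBeta_add_betaCorner (n : ℕ) :
    nextBeta (sCoeff n) 0 (betaNearCorner n + betaCorner n) =
      betaNearCorner (n + 1) + betaCorner (n + 1) := by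
  rw [← nextBeta_betaNearCorner, ← nextBeta_betaCorner, nextBeta, nextBeta, nextBeta]
  ring

lemma hasTrace_zero_data (n : ℕ) : HasTrace n 0 0 0 (sCoeff n) := by
  induction n with
  | zero => simpa [sCoeff_zero] using hasTrace_zero_zero
  | succ n ih =>
    simpa [nextAlpha, nextBeta, nextS_sCoeff] using
      ih.succ (sCoeff_nonneg n) ih (fun _ _ => rfl) (fun _ _ => rfl)

lemma exists_hasTrace_ind_q_one (n : ℕ) :
    ∃ α, HasTrace n (ind (q 1)) α (betaCorner n) (sCoeff n) := by
  induction n with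
  | zero => exact ⟨2, by simpa [betaCorner_zero, sCoeff_zero] using hasTrace_zero_ind_q_one⟩
  | succ n ih =>
    obtain ⟨α, h⟩ := ih
    rw [← nextS_sCoeff, ← nextBeta_betaCorner]
    refine ⟨_, h.succ (sCoeff_nonneg n) (hasTrace_zero_data n) ?_ ?_⟩
    · rw [ind_q_comp_Fmap_self]
      exact Set.eqOn_refl _ _
    · rw [← Fmap_q_self 1]
      exact (ind_Fmap_comp_Fmap_of_ne (by decide) (q_mem_triangle 1) q_one_ne_q_two).mono
        (Ebot_subset_triangle n)

lemma exists_hasTrace_ind_q_two (n : ℕ) :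
    ∃ α, HasTrace n (ind (q 2)) α (betaCorner n) (sCoeff n) := by
  induction n with
  | zero => exact ⟨2, by simpa [betaCorner_zero, sCoeff_zero] using hasTrace_zero_ind_q_two⟩
  | succ n ih =>
    obtain ⟨α, h⟩ := ih
    rw [← nextS_sCoeff, ← nextBeta_betaCorner, nextBeta_comm]
    refine ⟨_, (hasTrace_zero_data n).succ (sCoeff_nonneg n) h ?_ ?_⟩
    · rw [← Fmap_q_self 2]
      exact (ind_Fmap_comp_Fmap_of_ne (by decide) (q_mem_triangle 2) q_one_ne_q_two.symm).mono
        (Ebot_subset_triangle n)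
    · rw [ind_q_comp_Fmap_self]
      exact Set.eqOn_refl _ _

lemma eqOn_add {α M : Type*} [Add M] {s : Set α} {f f' g g' : α → M} (hf : Set.EqOn f f' s)
    (hg : Set.EqOn g g' s) : Set.EqOn (f + g) (f' + g') s :=
  fun x hx => by simp [hf hx, hg hx]

lemma xb_two_pow_sub_one_mem_triangle (n : ℕ) : xb n (2 ^ n - 1) ∈ triangle :=
  Ebot_subset_triangle n ⟨_, Nat.sub_le _ _, rfl⟩

lemma xb_two_pow_sub_one_ne_q_one {n : ℕ} (hn : 1 ≤ n) : xb n (2 ^ n - 1) ≠ q 1 := by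
  rw [← xb_zero n, (xb_injective n).ne_iff]
  have : 2 ≤ 2 ^ n := Nat.le_self_pow (by omega) 2
  omega

lemma Fmap_two_xb_two_pow_sub_one (n : ℕ) :
    Fmap 2 (xb n (2 ^ n - 1)) = xb (n + 1) (2 ^ (n + 1) - 1) := by
  have := Nat.one_le_two_pow (n := n)
  rw [Fmap_two_xb, pow_succ]
  congr 1
  omega

lemma xb_one_one : xb 1 1 = Fmap 1 (q 2) := by
  rw [← xb_two_pow 0, Fmap_one_xb]
  rfl

lemma exists_hasTrace_ind_near_q_two {n : ℕ} (hn : 1 ≤ n) :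
    ∃ α, HasTrace n (ind (xb n (2 ^ n - 1))) α (betaNearCorner n) (sCoeff n) := by
  induction n, hn using Nat.le_induction with
  | base =>
    have hβ : betaNearCorner 1 = nextBeta (sCoeff 0) 1 1 := by
      norm_num [betaNearCorner, nextBeta, sCoeff]
    rw [hβ, ← nextS_sCoeff, sCoeff_zero, show 2 ^ 1 - 1 = 1 from rfl, xb_one_one]
    refine ⟨_, hasTrace_zero_ind_q_two.succ zero_le_two hasTrace_zero_ind_q_one ?_ ?_⟩
    · rw [ind_Fmap_comp_Fmap]
      exact Set.eqOn_refl _ _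
    · rw [Fmap_q_comm, ind_Fmap_comp_Fmap]
      exact Set.eqOn_refl _ _
  | succ n hn ih =>
    obtain ⟨α, h⟩ := ih
    rw [← nextS_sCoeff, ← nextBeta_betaNearCorner, ← Fmap_two_xb_two_pow_sub_one]
    refine ⟨_, (hasTrace_zero_data n).succ (sCoeff_nonneg n) h ?_ ?_⟩
    · exact (ind_Fmap_comp_Fmap_of_ne (by decide) (xb_two_pow_sub_one_mem_triangle n)
        (xb_two_pow_sub_one_ne_q_one hn)).mono (Ebot_subset_triangle n)
    · rw [ind_Fmap_comp_Fmap]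
      exact Set.eqOn_refl _ _

lemma ind_q_two_eq_ind_Fmap : ind (q 2) = ind (Fmap 2 (q 2)) := by
  rw [Fmap_q_self]

lemma exists_hasTrace_ind_near_q_two_add_ind_q_two {n : ℕ} (hn : 1 ≤ n) :
    ∃ α, HasTrace n (ind (xb n (2 ^ n - 1)) + ind (q 2)) α (betaNearCorner n + betaCorner n)
      (sCoeff n) := by
  have hT := Ebot_subset_triangle
  induction n, hn using Nat.le_induction with
  | base =>
    have hβ : betaNearCorner 1 + betaCorner 1 = nextBeta (sCoeff 0) 1 2 := by
      norm_num [betaNearCorner, betaCorner, nextBeta, sCoeff]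
    rw [hβ, ← nextS_sCoeff, sCoeff_zero, show 2 ^ 1 - 1 = 1 from rfl, xb_one_one]
    refine ⟨_, hasTrace_zero_ind_q_two.succ zero_le_two hasTrace_zero_ind_q_one_add_ind_q_two ?_ ?_⟩
    · nth_rewrite 1 [ind_q_two_eq_ind_Fmap]
      simpa [Pi.add_comp, ind_Fmap_comp_Fmap] using eqOn_add (Set.eqOn_refl (ind (q 2)) _)
        ((ind_Fmap_comp_Fmap_of_ne (i := 2) (by decide) (q_mem_triangle 2)
          q_one_ne_q_two.symm).mono (hT 0))
    · rw [Pi.add_comp, Fmap_q_comm, ind_Fmap_comp_Fmap, ind_q_comp_Fmap_self]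
      exact Set.eqOn_refl _ _
  | succ n hn ih =>
    obtain ⟨α, h⟩ := ih
    rw [← nextS_sCoeff, ← nextBeta_add_betaCorner, ← Fmap_two_xb_two_pow_sub_one]
    refine ⟨_, (hasTrace_zero_data n).succ (sCoeff_nonneg n) h ?_ ?_⟩
    · rw [ind_q_two_eq_ind_Fmap]
      simpa [Pi.add_comp] using eqOn_add
        ((ind_Fmap_comp_Fmap_of_ne (i := 2) (by decide) (xb_two_pow_sub_one_mem_triangle n)
          (xb_two_pow_sub_one_ne_q_one hn)).mono (hT n))
        ((ind_Fmap_comp_Fmap_of_ne (i := 2) (by decide) (q_mem_triangle 2)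
          q_one_ne_q_two.symm).mono (hT n))
    · rw [Pi.add_comp, ind_Fmap_comp_Fmap, ind_q_comp_Fmap_self]
      exact Set.eqOn_refl _ _

theorem cond_succ_middle_of_hasTrace {n : ℕ} {S αK βK αR βR αP αL βL : ℝ} (hS : 0 ≤ S)
    (hZ : HasTrace n 0 0 0 S) (hK : HasTrace n (ind (xb n (2 ^ n - 1))) αK βK S)
    (hR : HasTrace n (ind (q 2)) αR βR S)
    (hP : HasTrace n (ind (xb n (2 ^ n - 1)) + ind (q 2)) αP (βK + βR) S)
    (hL : HasTrace n (ind (q 1)) αL βL S) :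
    cond (n + 1) (Eplus (n + 1)) (xb (n + 1) (2 ^ n - 1)) (xb (n + 1) (2 ^ n)) =
      5 / 3 * cond n (Eplus n) (xb n (2 ^ n - 1)) (xb n (2 ^ n)) +
        5 / 3 * βK * ((S + 2) * βR + βL) / ((S + 1) * (S + 3)) := by
  set p := xb n (2 ^ n - 1)
  have hT := Ebot_subset_triangle n
  have hpT : p ∈ triangle := xb_two_pow_sub_one_mem_triangle n
  have hp2 : p ≠ q 2 := by
    rw [← xb_two_pow n, (xb_injective n).ne_iff]
    have := Nat.one_le_two_pow (n := n)
    omega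
  have hp0 : p ≠ q 0 := xb_ne_q_zero _ _
  have hFp0 : ∀ z ∈ triangle, Fmap 1 z ≠ q 0 := fun z hz h =>
    q_injective.ne (show (0 : Fin 3) ≠ 1 by decide)
      (Fmap_eq_Fmap_of_ne (show (1 : Fin 3) ≠ 0 by decide) hz (q_mem_triangle 0)
        (h.trans (Fmap_q_self 0).symm)).2
  have hK' : HasTrace (n + 1) (ind (Fmap 1 p)) (nextAlpha S αK βK 0 0) (nextBeta S βK 0)
      (nextS S) :=
    hK.succ hS hZ (by rw [ind_Fmap_comp_Fmap]; exact Set.eqOn_refl _ _)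
      ((ind_Fmap_comp_Fmap_of_ne (by decide) hpT hp2).mono hT)
  have hR' : HasTrace (n + 1) (ind (Fmap 1 (q 2))) (nextAlpha S αR βR αL βL) (nextBeta S βR βL)
      (nextS S) :=
    hR.succ hS hL (by rw [ind_Fmap_comp_Fmap]; exact Set.eqOn_refl _ _)
      (by rw [Fmap_q_comm, ind_Fmap_comp_Fmap]; exact Set.eqOn_refl _ _)
  have hP' : HasTrace (n + 1) (ind (Fmap 1 p) + ind (Fmap 1 (q 2)))
      (nextAlpha S αP (βK + βR) αL βL) (nextBeta S (βK + βR) βL) (nextS S) :=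
    hP.succ hS hL
      (by rw [Pi.add_comp, ind_Fmap_comp_Fmap, ind_Fmap_comp_Fmap]; exact Set.eqOn_refl _ _)
      (by
        rw [Fmap_q_comm 1 2]
        simpa [Pi.add_comp, ind_Fmap_comp_Fmap] using eqOn_add
          ((ind_Fmap_comp_Fmap_of_ne (i := 1) (by decide) hpT hp2).mono hT) (Set.eqOn_refl _ _))
  rw [← Fmap_one_xb, ← Fmap_one_xb, xb_two_pow,
    cond_eq_of_hasTrace (hFp0 p hpT) (hFp0 _ (q_mem_triangle 2)) hK' hR' hP',
    cond_eq_of_hasTrace hp0 (q_injective.ne (by decide)) hK hR hP]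
  have h1 : S + 1 ≠ 0 := by linarith
  have h3 : S + 3 ≠ 0 := by linarith
  unfold nextAlpha
  field_simp
  ring

lemma cond_near_corner_eq (n : ℕ) :
    cond n (Eplus n) (xb n (2 ^ n - 1)) (xb n (2 ^ n)) = cond n (Eplus n) (xb n 0) (xb n 1) := by
  rw [cond_comm, ← cond_reflect_xb n (Nat.zero_le _) Nat.one_le_two_pow, Nat.sub_zero]

lemma correction_eq (n : ℕ) :
    5 / 3 * betaNearCorner n * ((sCoeff n + 2) * betaCorner n + betaCorner n) /
        ((sCoeff n + 1) * (sCoeff n + 3)) =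
      294 * 25 ^ (n + 1) /
        ((3 ^ (n + 1) + 6 * 10 ^ (n + 1)) * (5 * 3 ^ (n + 1) + 9 * 10 ^ (n + 1))) := by
  have h1 : (0 : ℝ) < 6 * 10 ^ n + 3 ^ n := by positivity
  have h2 : (0 : ℝ) < 20 * 10 ^ n + 3 ^ n := by positivity
  have h3 : (0 : ℝ) < 26 * 10 ^ n + 3 * 3 ^ n := by positivity
  have h25 : (25 : ℝ) ^ n = 5 ^ n * 5 ^ n := by rw [← mul_pow]; norm_num
  have h10 : (10 : ℝ) ^ n = 5 ^ n * 2 ^ n := by rw [← mul_pow]; norm_num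
  unfold betaNearCorner sCoeff betaCorner
  rw [pow_succ, pow_succ, pow_succ, h25]
  field_simp
  ring

lemma cond_middle_eq_cond_middle_succ {n : ℕ} (hn : 1 ≤ n) :
    cond n (Eplus n) (xb n (2 ^ (n - 1) - 1)) (xb n (2 ^ (n - 1))) =
      cond n (Eplus n) (xb n (2 ^ (n - 1))) (xb n (2 ^ (n - 1) + 1)) := by
  obtain ⟨k, rfl⟩ : ∃ k, n = k + 1 := ⟨n - 1, by omega⟩
  have hk : 2 ^ (k + 1) = 2 ^ k + 2 ^ k := by ring
  have := Nat.one_le_two_pow (n := k)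
  rw [Nat.add_sub_cancel, cond_comm _ _ (xb _ (2 ^ k)),
    ← cond_reflect_xb (k + 1) (i := 2 ^ k + 1) (j := 2 ^ k) (by omega) (by omega)]
  congr 2 <;> omega

lemma cond_one_middle : cond 1 (Eplus 1) (xb 1 (2 ^ 0 - 1)) (xb 1 (2 ^ 0)) = 20 / 9 := by
  have hp : xb 0 (2 ^ 0 - 1) = q 1 := xb_zero 0
  have hL : HasTrace 0 (ind (xb 0 (2 ^ 0 - 1))) 2 1 2 := hp ▸ hasTrace_zero_ind_q_one
  have hP : HasTrace 0 (ind (xb 0 (2 ^ 0 - 1)) + ind (q 2)) 2 (1 + 1) 2 := by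
    rw [hp, one_add_one_eq_two]
    exact hasTrace_zero_ind_q_one_add_ind_q_two
  have h0 : cond 0 (Eplus 0) (xb 0 (2 ^ 0 - 1)) (xb 0 (2 ^ 0)) = 1 := by
    rw [xb_two_pow, cond_eq_of_hasTrace (xb_ne_q_zero _ _) (q_injective.ne (by decide)) hL
      hasTrace_zero_ind_q_two hP]
    norm_num
  rw [cond_succ_middle_of_hasTrace zero_le_two hasTrace_zero_zero hL hasTrace_zero_ind_q_two hP
    hasTrace_zero_ind_q_one, h0]
  norm_num

lemma cond_succ_middle {n : ℕ} (hn : 1 ≤ n) :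
    cond (n + 1) (Eplus (n + 1)) (xb (n + 1) (2 ^ n - 1)) (xb (n + 1) (2 ^ n)) =
      5 / 3 * cond n (Eplus n) (xb n 0) (xb n 1) +
        294 * 25 ^ (n + 1) /
          ((3 ^ (n + 1) + 6 * 10 ^ (n + 1)) * (5 * 3 ^ (n + 1) + 9 * 10 ^ (n + 1))) := by
  obtain ⟨αK, hK⟩ := exists_hasTrace_ind_near_q_two hn
  obtain ⟨αR, hR⟩ := exists_hasTrace_ind_q_two n
  obtain ⟨αP, hP⟩ := exists_hasTrace_ind_near_q_two_add_ind_q_two hn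
  obtain ⟨αL, hL⟩ := exists_hasTrace_ind_q_one n
  rw [cond_succ_middle_of_hasTrace (sCoeff_nonneg n) (hasTrace_zero_data n) hK hR hP hL,
    cond_near_corner_eq, correction_eq]

/-- With `m_n = c^n_{x_{2^{n−1}−1}, x_{2^{n−1}}}` and `l_n = c^n_{x₀,x₁}`
(conductances of `E_n⁺` at level `n`): `m_n = c^n_{x_{2^{n−1}}, x_{2^{n−1}+1}}`,
`m₁ = 20/9`, and the stated recurrence for `m_{n+1}`. -/
theorem stmt13 :
    (∀ n : ℕ, 1 ≤ n →
      cond n (Eplus n) (xb n (2 ^ (n - 1) - 1)) (xb n (2 ^ (n - 1))) =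
        cond n (Eplus n) (xb n (2 ^ (n - 1))) (xb n (2 ^ (n - 1) + 1))) ∧
    cond 1 (Eplus 1) (xb 1 (2 ^ 0 - 1)) (xb 1 (2 ^ 0)) = 20 / 9 ∧
    ∀ n : ℕ, 1 ≤ n →
      cond (n + 1) (Eplus (n + 1)) (xb (n + 1) (2 ^ n - 1)) (xb (n + 1) (2 ^ n)) =
        5 / 3 * cond n (Eplus n) (xb n 0) (xb n 1) +
          294 * 25 ^ (n + 1) /
            ((3 ^ (n + 1) + 6 * 10 ^ (n + 1)) * (5 * 3 ^ (n + 1) + 9 * 10 ^ (n + 1))) :=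
  ⟨fun _ hn => cond_middle_eq_cond_middle_succ hn, cond_one_middle, fun _ hn => cond_succ_middle hn⟩

end SGPaper
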